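/- arXiv:1904.02961 — 5 statements merged into one kernel-verified Lean document; each statement's English description precedes it below -/
import Mathlib

section
/- Fix A > 0 and λ ∈ (0, 1/8), and set ξ = √(1 − 8λ) ∈ (0, 1). For n ∈ ℕ ∪ {0} define M_n = (2λ Aⁿ)/(n(n−1) + 2λ) · Σ_{j=0}^{n} (1)_j (−n)_j / ((3/2 + ξ/2 − n)_j (3/2 − ξ/2 − n)_j) · (2/A)^j / j! (the series terminates at j = n since (−n)_j = 0 for j > n). Then M₀ = 1 and, for every n ∈ ℕ, (n(n−1)/2 + λ)·M_n + n·M_{n−1} = λ·Aⁿ. -/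
open scoped BigOperators

/-- The Pochhammer symbol (rising factorial): `(z)₀ = 1`, `(z)_{n+1} = (z)_n · (z + n)`. -/
noncomputable def poch (z : ℝ) : ℕ → ℝ
  | 0 => 1
  | n + 1 => poch z n * (z + (n : ℝ))

/-!
Since `(1)_j = j!`, the sum in `Mₙ` is `Sₙ = Σ_{j ≤ n} (−n)_j / ((a−n)_j (b−n)_j) · x^j` with
`a, b = 3/2 ± ξ/2` and `x = 2/A`. Peeling off the first factor of each Pochhammer symbol
gives `S_{n+1} = 1 − (n+1) x / ((a−n−1)(b−n−1)) · Sₙ`, and since `a + b = 3` and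
`ab = 2 + 2λ`, the denominator `(a−n−1)(b−n−1)` is exactly `dₙ = n(n−1) + 2λ`.
Writing `Mₙ = 2λAⁿ Sₙ / dₙ`, the recurrence for `Mₙ` is this recurrence for `Sₙ` multiplied
by `λA^{n+1}`.
-/

theorem poch_zero (z : ℝ) : poch z 0 = 1 := rfl

theorem poch_succ (z : ℝ) (j : ℕ) : poch z (j + 1) = poch z j * (z + j) := rfl

theorem poch_succ_eq_mul_poch_add_one (z : ℝ) (j : ℕ) :
    poch z (j + 1) = z * poch (z + 1) j := by
  induction j with
  | zero => simp [poch_succ, poch_zero]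
  | succ k ih =>
    rw [poch_succ, ih, poch_succ]
    push_cast
    ring

theorem poch_one (j : ℕ) : poch 1 j = j.factorial := by
  induction j with
  | zero => simp [poch_zero]
  | succ k ih =>
    rw [poch_succ, ih, Nat.factorial_succ]
    push_cast
    ring

noncomputable def hypergeomSum (n : ℕ) (a b x : ℝ) : ℝ :=
  ∑ j ∈ Finset.range (n + 1), poch (-n) j / (poch (a - n) j * poch (b - n) j) * x ^ j

theorem hypergeomSum_zero (a b x : ℝ) : hypergeomSum 0 a b x = 1 := by
  simp [hypergeomSum, poch_zero]

theorem hypergeomSum_succ (n : ℕ) (a b x : ℝ) :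
    hypergeomSum (n + 1) a b x =
      1 - (n + 1) * x / ((a - (n + 1)) * (b - (n + 1))) * hypergeomSum n a b x := by
  rw [hypergeomSum, Finset.sum_range_succ', hypergeomSum, Finset.mul_sum]
  simp only [poch_zero, pow_zero, div_one, mul_one, Nat.cast_succ]
  rw [add_comm, sub_eq_add_neg (1 : ℝ), ← Finset.sum_neg_distrib]
  congr 1
  refine Finset.sum_congr rfl fun j _ => ?_
  have shift (c : ℝ) : c - (n + 1) + 1 = c - n := by ring
  rw [poch_succ_eq_mul_poch_add_one, poch_succ_eq_mul_poch_add_one,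
    poch_succ_eq_mul_poch_add_one, shift, shift, neg_add, neg_add_cancel_right, pow_succ]
  simp only [div_eq_mul_inv, mul_inv]
  ring

theorem shifted_roots_product (lam ξ : ℝ) (hξ : ξ ^ 2 = 1 - 8 * lam) (n : ℝ) :
    (3/2 + ξ/2 - (n + 1)) * (3/2 - ξ/2 - (n + 1)) = n * (n - 1) + 2 * lam := by
  linear_combination (-1/4 : ℝ) * hξ

theorem natCast_mul_sub_one_add_pos {lam : ℝ} (hlam : 0 < lam) (n : ℕ) :
    0 < (n : ℝ) * ((n : ℝ) - 1) + 2 * lam := by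
  rcases n with _ | n
  · simpa using hlam
  · push_cast
    nlinarith [(n.cast_nonneg : (0 : ℝ) ≤ n)]

/-- For `A > 0`, `λ ∈ (0,1/8)`, `ξ = √(1−8λ)`, the explicit formula
`Mₙ = (2λAⁿ)/(n(n−1)+2λ) · Σ_{j=0}^{n} (1)_j(−n)_j / ((3/2+ξ/2−n)_j (3/2−ξ/2−n)_j) · (2/A)^j/j!`
satisfies `M₀ = 1` and the moment recurrence
`(n(n−1)/2 + λ)·Mₙ + n·M_{n−1} = λ·Aⁿ` for every `n ≥ 1`. -/
theorem integer_moment_formula_solves_recurrence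
    (A lam : ℝ) (hA : 0 < A) (hlam : lam ∈ Set.Ioo (0 : ℝ) (1/8))
    (ξ : ℝ) (hξ : ξ = Real.sqrt (1 - 8 * lam))
    (M : ℕ → ℝ)
    (hM : ∀ n : ℕ, M n =
      (2 * lam * A ^ n) / ((n : ℝ) * ((n : ℝ) - 1) + 2 * lam) *
        ∑ j ∈ Finset.range (n + 1),
          poch 1 j * poch (-(n : ℝ)) j /
              (poch (3/2 + ξ/2 - (n : ℝ)) j * poch (3/2 - ξ/2 - (n : ℝ)) j) *
            (2 / A) ^ j / (Nat.factorial j : ℝ)) :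
    M 0 = 1 ∧
      ∀ n : ℕ, 1 ≤ n →
        ((n : ℝ) * ((n : ℝ) - 1) / 2 + lam) * M n + (n : ℝ) * M (n - 1) = lam * A ^ n := by
  set S := fun n : ℕ => hypergeomSum n (3/2 + ξ/2) (3/2 - ξ/2) (2 / A)
  have hξ2 : ξ ^ 2 = 1 - 8 * lam := by
    rw [hξ, Real.sq_sqrt]
    linarith [hlam.2]
  have hd (n : ℕ) := (natCast_mul_sub_one_add_pos hlam.1 n).ne'
  have hMS (n : ℕ) : M n = 2 * lam * A ^ n / (n * (n - 1 : ℝ) + 2 * lam) * S n := by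
    rw [hM n]
    congr 1
    refine Finset.sum_congr rfl fun j _ => ?_
    rw [poch_one]
    field_simp
  have hS (n : ℕ) : S (n + 1) = 1 - (n + 1) * (2 / A) / (n * (n - 1 : ℝ) + 2 * lam) * S n := by
    simp only [S, hypergeomSum_succ, shifted_roots_product lam ξ hξ2]
  refine ⟨by simp [hMS, S, hypergeomSum_zero, hlam.1.ne'], fun n hn => ?_⟩
  obtain ⟨m, rfl⟩ := Nat.exists_eq_add_of_le' hn
  have hdm1 := hd (m + 1)
  rw [Nat.add_sub_cancel, hMS, hMS, hS]
  push_cast at hdm1 ⊢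
  field_simp [hA.ne', hd m]
  ring
end

section
/- Let λ, ξ ∈ ℂ with ξ² = 1 − 8λ, and define f(t) = 2ᵗ · Γ(1/2 + ξ/2 − t) · Γ(1/2 − ξ/2 − t) / Γ(−t) for t ∈ ℂ. Then for every s ∈ ℂ such that none of −s, 1/2 + ξ/2 − s, 1/2 − ξ/2 − s is a nonpositive integer, one has (s(s−1)/2 + λ)·f(s) + s·f(s−1) = 0; i.e., f is a solution of the homogeneous version of the recurrence (s(s−1)/2 + λ)·f(s) + s·f(s−1) = λ·A^s. -/
namespace Complex

lemma Gamma_sub_sub_one {z s : ℂ} (h : z - s ≠ 0) :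
    Gamma (z - (s - 1)) = (z - s) * Gamma (z - s) := by
  rw [show z - (s - 1) = z - s + 1 by ring, Gamma_add_one _ h]

noncomputable def twoPowGammaRatio (α β t : ℂ) : ℂ :=
  2 ^ t * Gamma (α - t) * Gamma (β - t) / Gamma (-t)

lemma mul_twoPowGammaRatio_sub_one {α β s : ℂ} (hs : ∀ m : ℕ, -s ≠ -m)
    (hα : α - s ≠ 0) (hβ : β - s ≠ 0) :
    s * twoPowGammaRatio α β (s - 1) = -((α - s) * (β - s) / 2) * twoPowGammaRatio α β s := by
  have hΓ : Gamma (-s) ≠ 0 := Gamma_ne_zero hs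
  have hs0 : s ≠ 0 := by simpa using hs 0
  have hneg : Gamma (-(s - 1)) = -s * Gamma (-s) := by
    simpa using Gamma_sub_sub_one (z := 0) (s := s) (by simpa using hs0)
  have hpow : (2 : ℂ) ^ (s - 1) = 2 ^ s / 2 := by
    rw [cpow_sub _ _ two_ne_zero, cpow_one]
  unfold twoPowGammaRatio
  rw [Gamma_sub_sub_one hα, Gamma_sub_sub_one hβ, hneg, hpow]
  field_simp

end Complex

open Complex

/-- Let `ξ² = 1 − 8λ` and `f(t) = 2ᵗ·Γ(1/2+ξ/2−t)·Γ(1/2−ξ/2−t)/Γ(−t)`. Then for every `s`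
such that none of `−s`, `1/2+ξ/2−s`, `1/2−ξ/2−s` is a nonpositive integer,
`(s(s−1)/2 + λ)·f(s) + s·f(s−1) = 0`, i.e. `f` solves the homogeneous recurrence. -/
theorem homogeneous_solution_of_recurrence
    (lam ξ : ℂ) (hξ : ξ ^ 2 = 1 - 8 * lam)
    (f : ℂ → ℂ)
    (hf : ∀ t : ℂ, f t =
      (2 : ℂ) ^ t * Complex.Gamma (1/2 + ξ/2 - t) * Complex.Gamma (1/2 - ξ/2 - t) /
        Complex.Gamma (-t))
    (s : ℂ)
    (h1 : ∀ k : ℕ, -s ≠ -(k : ℂ))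
    (h2 : ∀ k : ℕ, 1/2 + ξ/2 - s ≠ -(k : ℂ))
    (h3 : ∀ k : ℕ, 1/2 - ξ/2 - s ≠ -(k : ℂ)) :
    (s * (s - 1) / 2 + lam) * f s + s * f (s - 1) = 0 := by
  have hf' : f = twoPowGammaRatio (1/2 + ξ/2) (1/2 - ξ/2) := funext hf
  have hα : 1/2 + ξ/2 - s ≠ 0 := by simpa using h2 0
  have hβ : 1/2 - ξ/2 - s ≠ 0 := by simpa using h3 0
  rw [hf', mul_twoPowGammaRatio_sub_one h1 hα hβ]
  -- `(1/2 + ξ/2 - s)(1/2 - ξ/2 - s) = (1/2 - s)² - ξ²/4 = s(s - 1) + 2λ`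
  linear_combination (twoPowGammaRatio (1/2 + ξ/2) (1/2 - ξ/2) s / 8) * hξ
end

section
/- Fix A > 0 and λ ∈ (0, 1/8), and set ξ = √(1 − 8λ) ∈ (0, 1). For s ∈ ℝ not of the form 1/2 + ξ/2 + k or 1/2 − ξ/2 + k with k a nonnegative integer, define g(s) = (2λ A^s)/(s(s−1) + 2λ) · ₂F₂[1, −s; 3/2 + ξ/2 − s, 3/2 − ξ/2 − s; 2/A]. Then for every such s with s − 1 also not of that form, (s(s−1)/2 + λ)·g(s) + s·g(s−1) = λ·A^s. -/
noncomputable def F22 (a₁ a₂ b₁ b₂ z : ℝ) : ℝ :=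
  ∑' n : ℕ, poch a₁ n * poch a₂ n / (poch b₁ n * poch b₂ n) * z ^ n / (Nat.factorial n : ℝ)

open Filter Topology
open scoped Nat

lemma poch_one_s3 (n : ℕ) : poch 1 n = n ! := by
  induction n with
  | zero => simp [poch]
  | succ n ih => rw [poch, ih, Nat.factorial_succ]; push_cast; ring

lemma poch_succ_left (z : ℝ) (n : ℕ) : poch z (n + 1) = z * poch (z + 1) n := by
  induction n with
  | zero => simp [poch]
  | succ n ih => rw [poch, ih, poch]; push_cast; ring

namespace F22

noncomputable def term (a₁ a₂ b₁ b₂ z : ℝ) (n : ℕ) : ℝ :=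
  poch a₁ n * poch a₂ n / (poch b₁ n * poch b₂ n) * z ^ n / (n ! : ℝ)

variable (a₁ a₂ b₁ b₂ z : ℝ)

lemma term_succ (n : ℕ) :
    term a₁ a₂ b₁ b₂ z (n + 1) =
      term a₁ a₂ b₁ b₂ z n * ((a₁ + n) * (a₂ + n) / ((b₁ + n) * (b₂ + n)) * (z / (n + 1))) := by
  simp only [term, poch, pow_succ, Nat.factorial_succ, Nat.cast_mul, Nat.cast_succ,
    div_eq_mul_inv, mul_inv]
  ring

lemma tendsto_term_ratio :
    Tendsto (fun n : ℕ ↦ (a₁ + n) * (a₂ + n) / ((b₁ + n) * (b₂ + n)) * (z / (n + 1)))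
      atTop (𝓝 0) := by
  have h : ∀ a b : ℝ, Tendsto (fun n : ℕ ↦ (a + n) / (b + n)) atTop (𝓝 1) := fun a b ↦ by
    simpa using tendsto_add_mul_div_add_mul_atTop_nhds a b (1 : ℝ) one_ne_zero
  have hz : Tendsto (fun n : ℕ ↦ z / (n + 1)) atTop (𝓝 0) := by
    simpa [div_eq_mul_one_div z] using
      (tendsto_one_div_add_atTop_nhds_zero_nat (𝕜 := ℝ)).const_mul z
  simpa [mul_div_mul_comm] using ((h a₁ b₁).mul (h a₂ b₂)).mul hz

/-- With the junk value `x / 0 = 0`, the series converges even when a lower parameter is a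
nonpositive integer: its terms then vanish from some index on. -/
theorem summable_term : Summable (term a₁ a₂ b₁ b₂ z) := by
  refine summable_of_ratio_norm_eventually_le (r := 1 / 2) (by norm_num) ?_
  filter_upwards [(tendsto_term_ratio a₁ a₂ b₁ b₂ z).norm.eventually_le_const
    (show ‖(0 : ℝ)‖ < 1 / 2 by norm_num)] with n hn
  rw [term_succ, norm_mul, mul_comm]
  gcongr

lemma term_one_succ (a : ℝ) (n : ℕ) :
    term 1 a b₁ b₂ z (n + 1) = a * z / (b₁ * b₂) * term 1 (a + 1) (b₁ + 1) (b₂ + 1) z n := by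
  simp only [term, poch_succ_left a, poch_succ_left b₁, poch_succ_left b₂, poch_one_s3]
  field_simp
  ring

end F22

theorem F22_one_eq_one_add (a b₁ b₂ z : ℝ) :
    F22 1 a b₁ b₂ z = 1 + a * z / (b₁ * b₂) * F22 1 (a + 1) (b₁ + 1) (b₂ + 1) z := by
  change ∑' n, F22.term 1 a b₁ b₂ z n = 1 + _ * ∑' n, F22.term 1 (a + 1) (b₁ + 1) (b₂ + 1) z n
  rw [(F22.summable_term 1 a b₁ b₂ z).tsum_eq_zero_add, ← tsum_mul_left]
  simp only [F22.term_one_succ]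
  simp [F22.term, poch]

theorem particular_solution_of_fractional_recurrence_general
    (A lam : ℝ) (hA : 0 < A) (hlam : lam ∈ Set.Ioo (0 : ℝ) (1/8))
    (ξ : ℝ) (hξ : ξ = Real.sqrt (1 - 8 * lam))
    (g : ℝ → ℝ)
    (hg : ∀ s : ℝ, g s =
      (2 * lam * A ^ s) / (s * (s - 1) + 2 * lam) *
        F22 1 (-s) (3/2 + ξ/2 - s) (3/2 - ξ/2 - s) (2 / A))
    (s : ℝ)
    (hs : ∀ k : ℕ, s ≠ 1/2 + ξ/2 + (k : ℝ) ∧ s ≠ 1/2 - ξ/2 + (k : ℝ)) :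
    (s * (s - 1) / 2 + lam) * g s + s * g (s - 1) = lam * A ^ s := by
  have hξsq : ξ ^ 2 = 1 - 8 * lam := by rw [hξ, Real.sq_sqrt]; linarith [hlam.2]
  have hD : s * (s - 1) + 2 * lam ≠ 0 := by
    rw [show s * (s - 1) + 2 * lam = (s - (1/2 + ξ/2)) * (s - (1/2 - ξ/2)) by
      linear_combination (1/4 : ℝ) * hξsq]
    exact mul_ne_zero (sub_ne_zero.2 (by simpa using (hs 0).1))
      (sub_ne_zero.2 (by simpa using (hs 0).2))
  have hD' : (s - 1) * (s - 1 - 1) + 2 * lam = (3/2 + ξ/2 - s) * (3/2 - ξ/2 - s) := by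
    linear_combination (1/4 : ℝ) * hξsq
  have hF := F22_one_eq_one_add (-s) (3/2 + ξ/2 - s) (3/2 - ξ/2 - s) (2 / A)
  rw [show -s + 1 = -(s - 1) by ring, show 3/2 + ξ/2 - s + 1 = 3/2 + ξ/2 - (s - 1) by ring,
    show 3/2 - ξ/2 - s + 1 = 3/2 - ξ/2 - (s - 1) by ring] at hF
  rw [hg s, hg (s - 1), hF, hD', Real.rpow_sub hA, Real.rpow_one]
  field_simp
  ring

/-- For `A > 0`, `λ ∈ (0,1/8)`, `ξ = √(1−8λ)`, the function
`g(s) = (2λA^s)/(s(s−1)+2λ) · ₂F₂[1,−s; 3/2+ξ/2−s, 3/2−ξ/2−s; 2/A]` is a particular solution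
of the fractional-moment recurrence `(s(s−1)/2+λ)·g(s) + s·g(s−1) = λ·A^s`, for every `s` such
that neither `s` nor `s − 1` is of the form `1/2 ± ξ/2 + k`, `k ∈ ℕ ∪ {0}`. -/
theorem particular_solution_of_fractional_recurrence
    (A lam : ℝ) (hA : 0 < A) (hlam : lam ∈ Set.Ioo (0 : ℝ) (1/8))
    (ξ : ℝ) (hξ : ξ = Real.sqrt (1 - 8 * lam))
    (g : ℝ → ℝ)
    (hg : ∀ s : ℝ, g s =
      (2 * lam * A ^ s) / (s * (s - 1) + 2 * lam) *
        F22 1 (-s) (3/2 + ξ/2 - s) (3/2 - ξ/2 - s) (2 / A))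
    (s : ℝ)
    (hs : ∀ k : ℕ, s ≠ 1/2 + ξ/2 + (k : ℝ) ∧ s ≠ 1/2 - ξ/2 + (k : ℝ))
    (hs' : ∀ k : ℕ, s - 1 ≠ 1/2 + ξ/2 + (k : ℝ) ∧ s - 1 ≠ 1/2 - ξ/2 + (k : ℝ)) :
    (s * (s - 1) / 2 + lam) * g s + s * g (s - 1) = lam * A ^ s :=
  particular_solution_of_fractional_recurrence_general A lam hA hlam ξ hξ g hg s hs
end

section
/- Fix A > 0 and λ ∈ (0, 1/8), and set ξ = √(1 − 8λ) ∈ (0, 1). For any constant C ∈ ℝ, define F(s) = (2λ A^s)/(s(s−1) + 2λ) · ₂F₂[1, −s; 3/2 + ξ/2 − s, 3/2 − ξ/2 − s; 2/A] + C · 2^s · Γ(1/2 + ξ/2 − s) · Γ(1/2 − ξ/2 − s) / Γ(−s). Then for every s ∈ ℝ such that neither s nor s − 1 is of the form 1/2 ± ξ/2 + k with k a nonnegative integer and such that neither −s nor −(s−1) is a nonpositive integer, one has (s(s−1)/2 + λ)·F(s) + s·F(s−1) = λ·A^s. -/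
open Filter in
lemma poch_one_eq : ∀ n : ℕ, poch 1 n = (Nat.factorial n : ℝ) := by
  intro n; induction n with
  | zero => simp [poch]
  | succ n ih => simp [poch, ih, Nat.factorial_succ]; push_cast; ring

lemma poch_shift (z : ℝ) : ∀ n : ℕ, poch z (n + 1) = z * poch (z + 1) n := by
  intro n; induction n with
  | zero => simp [poch]
  | succ n ih =>
      show poch z (n+1) * (z + ((n+1 : ℕ) : ℝ)) = z * (poch (z+1) n * ((z+1) + (n:ℝ)))
      rw [ih]; push_cast; ring

lemma poch_ne_zero (z : ℝ) (h : ∀ i : ℕ, z + (i : ℝ) ≠ 0) : ∀ n : ℕ, poch z n ≠ 0 := by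
  intro n; induction n with
  | zero => simp [poch]
  | succ n ih => exact mul_ne_zero ih (h n)

open Filter in
lemma summable_F22 (c b₁ b₂ x : ℝ) (h₁ : ∀ i : ℕ, b₁ + (i : ℝ) ≠ 0) (h₂ : ∀ i : ℕ, b₂ + (i : ℝ) ≠ 0) :
    Summable (fun n : ℕ => poch 1 n * poch c n / (poch b₁ n * poch b₂ n) * x ^ n / (Nat.factorial n : ℝ)) := by
  set t : ℕ → ℝ := fun n => poch 1 n * poch c n / (poch b₁ n * poch b₂ n) * x ^ n / (Nat.factorial n : ℝ) with ht
  have hrec : ∀ n : ℕ, t (n + 1) = t n * ((c + n) * x / ((b₁ + n) * (b₂ + n))) := by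
    intro n
    have e1 := poch_ne_zero b₁ h₁ n
    have e2 := poch_ne_zero b₂ h₂ n
    have e3 := h₁ n
    have e4 := h₂ n
    have e5 : ((Nat.factorial n : ℝ)) ≠ 0 := Nat.cast_ne_zero.mpr (Nat.factorial_ne_zero n)
    show poch 1 n * (1 + (n:ℝ)) * (poch c n * (c + n)) / (poch b₁ n * (b₁ + n) * (poch b₂ n * (b₂ + n))) * (x ^ n * x) / ((Nat.factorial (n+1) : ℝ)) =
      poch 1 n * poch c n / (poch b₁ n * poch b₂ n) * x ^ n / (Nat.factorial n : ℝ) * ((c + n) * x / ((b₁ + n) * (b₂ + n)))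
    rw [Nat.factorial_succ]
    push_cast
    field_simp
    ring
  apply summable_of_ratio_norm_eventually_le (r := 1/2) (by norm_num)
  obtain ⟨N, hN⟩ := exists_nat_ge (2*|b₁| + 2*|b₂| + |c| + 16*|x| + 1)
  filter_upwards [eventually_ge_atTop N] with n hn
  have hn' : 2*|b₁| + 2*|b₂| + |c| + 16*|x| + 1 ≤ (n : ℝ) := hN.trans (by exact_mod_cast hn)
  have habs : |(c + n) * x / ((b₁ + n) * (b₂ + n))| ≤ 1/2 := by
    have hc : |c + (n:ℝ)| ≤ (n:ℝ) + |c| := by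
      calc |c + (n:ℝ)| ≤ |c| + |(n:ℝ)| := abs_add_le _ _
        _ = (n:ℝ) + |c| := by rw [abs_of_nonneg (by positivity : (0:ℝ) ≤ (n:ℝ))]; ring
    have hb1 : (n:ℝ)/2 ≤ |b₁ + n| := by
      have h' : (n:ℝ) ≤ |b₁ + n| + |b₁| := by
        have h2 := abs_add_le (b₁ + (n:ℝ)) (-b₁)
        rw [abs_neg, show (b₁ + (n:ℝ)) + (-b₁) = (n:ℝ) by ring, abs_of_nonneg (by positivity : (0:ℝ) ≤ (n:ℝ))] at h2
        exact h2
      have hB : |b₁| ≤ (n:ℝ)/2 := by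
        have := abs_nonneg b₂; have := abs_nonneg c; have := abs_nonneg x; linarith
      linarith
    have hb2 : (n:ℝ)/2 ≤ |b₂ + n| := by
      have h' : (n:ℝ) ≤ |b₂ + n| + |b₂| := by
        have h2 := abs_add_le (b₂ + (n:ℝ)) (-b₂)
        rw [abs_neg, show (b₂ + (n:ℝ)) + (-b₂) = (n:ℝ) by ring, abs_of_nonneg (by positivity : (0:ℝ) ≤ (n:ℝ))] at h2
        exact h2
      have hB : |b₂| ≤ (n:ℝ)/2 := by
        have := abs_nonneg b₁; have := abs_nonneg c; have := abs_nonneg x; linarith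
      linarith
    have hnpos : (1:ℝ) ≤ (n:ℝ) := by
      have := abs_nonneg b₁; have := abs_nonneg b₂; have := abs_nonneg c; have := abs_nonneg x; linarith
    have hdenpos : 0 < |(b₁ + n) * (b₂ + n)| := by
      rw [abs_mul]
      have : (0:ℝ) < (n:ℝ)/2 := by linarith
      exact mul_pos (lt_of_lt_of_le this hb1) (lt_of_lt_of_le this hb2)
    rw [abs_div, div_le_iff₀ hdenpos, abs_mul, abs_mul]
    have h16 : 16*|x| ≤ (n:ℝ) := by
      have := abs_nonneg b₁; have := abs_nonneg b₂; have := abs_nonneg c; linarith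
    have hcn : |c| ≤ (n:ℝ) := by
      have := abs_nonneg b₁; have := abs_nonneg b₂; have := abs_nonneg x; linarith
    nlinarith [abs_nonneg x, abs_nonneg (c + (n:ℝ)), mul_le_mul_of_nonneg_right hc (abs_nonneg x),
      mul_le_mul hb1 hb2 (by linarith) (abs_nonneg (b₁ + (n:ℝ)))]
  rw [hrec, norm_mul]
  calc ‖t n‖ * ‖(c + n) * x / ((b₁ + n) * (b₂ + n))‖ ≤ ‖t n‖ * (1/2) := by
        exact mul_le_mul_of_nonneg_left habs (norm_nonneg _)
    _ = 1/2 * ‖t n‖ := by ring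
lemma F22_shift (c b₁ b₂ x : ℝ) (h₁ : ∀ i : ℕ, b₁ + (i : ℝ) ≠ 0) (h₂ : ∀ i : ℕ, b₂ + (i : ℝ) ≠ 0) :
    F22 1 c b₁ b₂ x = 1 + c * x / (b₁ * b₂) * F22 1 (c + 1) (b₁ + 1) (b₂ + 1) x := by
  have h₁' : ∀ i : ℕ, (b₁ + 1) + (i : ℝ) ≠ 0 := by
    intro i; have := h₁ (i + 1); push_cast at this ⊢; intro h; exact this (by linarith)
  have h₂' : ∀ i : ℕ, (b₂ + 1) + (i : ℝ) ≠ 0 := by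
    intro i; have := h₂ (i + 1); push_cast at this ⊢; intro h; exact this (by linarith)
  have hu : Summable (fun n : ℕ => poch 1 n * poch (c + 1) n / (poch (b₁ + 1) n * poch (b₂ + 1) n) * x ^ n / (Nat.factorial n : ℝ)) :=
    summable_F22 (c + 1) (b₁ + 1) (b₂ + 1) x h₁' h₂'
  set t : ℕ → ℝ := fun n => poch 1 n * poch c n / (poch b₁ n * poch b₂ n) * x ^ n / (Nat.factorial n : ℝ) with ht
  set u : ℕ → ℝ := fun n => poch 1 n * poch (c + 1) n / (poch (b₁ + 1) n * poch (b₂ + 1) n) * x ^ n / (Nat.factorial n : ℝ) with hu'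
  have key : ∀ n : ℕ, t (n + 1) = c * x / (b₁ * b₂) * u n := by
    intro n
    have e1 := poch_ne_zero (b₁ + 1) h₁' n
    have e2 := poch_ne_zero (b₂ + 1) h₂' n
    have e3 : b₁ ≠ 0 := by have := h₁ 0; simpa using this
    have e4 : b₂ ≠ 0 := by have := h₂ 0; simpa using this
    have e5 : ((Nat.factorial n : ℝ)) ≠ 0 := Nat.cast_ne_zero.mpr (Nat.factorial_ne_zero n)
    show poch 1 (n+1) * poch c (n+1) / (poch b₁ (n+1) * poch b₂ (n+1)) * x ^ (n+1) / (Nat.factorial (n+1) : ℝ) =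
      c * x / (b₁ * b₂) * (poch 1 n * poch (c+1) n / (poch (b₁+1) n * poch (b₂+1) n) * x ^ n / (Nat.factorial n : ℝ))
    rw [poch_shift c n, poch_shift b₁ n, poch_shift b₂ n, poch_one_eq, poch_one_eq,
      Nat.factorial_succ, pow_succ]
    push_cast
    field_simp
  have hts : Summable (fun n : ℕ => t (n + 1)) := by
    simpa only [key] using hu.mul_left (c * x / (b₁ * b₂))
  have h0 : t 0 = 1 := by simp [ht, poch]
  have : F22 1 c b₁ b₂ x = t 0 + ∑' n : ℕ, t (n + 1) := tsum_eq_zero_add' hts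
  rw [this, h0]
  congr 1
  calc ∑' n : ℕ, t (n + 1) = ∑' n : ℕ, c * x / (b₁ * b₂) * u n := by exact tsum_congr key
    _ = c * x / (b₁ * b₂) * ∑' n : ℕ, u n := tsum_mul_left
    _ = c * x / (b₁ * b₂) * F22 1 (c + 1) (b₁ + 1) (b₂ + 1) x := rfl

/-- The general solution of the fractional-moment recurrence: for `A > 0`, `λ ∈ (0,1/8)`,
`ξ = √(1−8λ)` and any constant `C`, the function
`F(s) = (2λA^s)/(s(s−1)+2λ)·₂F₂[1,−s; 3/2+ξ/2−s, 3/2−ξ/2−s; 2/A]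
        + C·2^s·Γ(1/2+ξ/2−s)·Γ(1/2−ξ/2−s)/Γ(−s)`
satisfies `(s(s−1)/2+λ)·F(s) + s·F(s−1) = λ·A^s`, for every `s` such that neither `s` nor
`s−1` is of the form `1/2 ± ξ/2 + k` (`k ∈ ℕ ∪ {0}`), and neither `−s` nor `−(s−1)` is a
nonpositive integer. -/
theorem general_solution_of_fractional_recurrence
    (A lam : ℝ) (hA : 0 < A) (hlam : lam ∈ Set.Ioo (0 : ℝ) (1/8))
    (ξ : ℝ) (hξ : ξ = Real.sqrt (1 - 8 * lam))
    (C : ℝ)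
    (F : ℝ → ℝ)
    (hF : ∀ s : ℝ, F s =
      (2 * lam * A ^ s) / (s * (s - 1) + 2 * lam) *
          F22 1 (-s) (3/2 + ξ/2 - s) (3/2 - ξ/2 - s) (2 / A) +
        C * 2 ^ s * Real.Gamma (1/2 + ξ/2 - s) * Real.Gamma (1/2 - ξ/2 - s) /
          Real.Gamma (-s))
    (s : ℝ)
    (hs : ∀ k : ℕ, s ≠ 1/2 + ξ/2 + (k : ℝ) ∧ s ≠ 1/2 - ξ/2 + (k : ℝ))
    (hs' : ∀ k : ℕ, s - 1 ≠ 1/2 + ξ/2 + (k : ℝ) ∧ s - 1 ≠ 1/2 - ξ/2 + (k : ℝ))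
    (hns : ∀ k : ℕ, -s ≠ -(k : ℝ))
    (hns' : ∀ k : ℕ, -(s - 1) ≠ -(k : ℝ)) :
    (s * (s - 1) / 2 + lam) * F s + s * F (s - 1) = lam * A ^ s := by
  have hξ2 : ξ ^ 2 = 1 - 8 * lam := by
    rw [hξ]; exact Real.sq_sqrt (by linarith [hlam.2])
  -- nonzero facts
  have hα0 : (1/2 + ξ/2 - s : ℝ) ≠ 0 := fun h => (hs 0).1 (by push_cast; linarith)
  have hβ0 : (1/2 - ξ/2 - s : ℝ) ≠ 0 := fun h => (hs 0).2 (by push_cast; linarith)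
  have hb₁ : ∀ i : ℕ, (3/2 + ξ/2 - s : ℝ) + (i : ℝ) ≠ 0 := by
    intro i h
    have := (hs (i + 1)).1; push_cast at this; exact this (by linarith)
  have hb₂ : ∀ i : ℕ, (3/2 - ξ/2 - s : ℝ) + (i : ℝ) ≠ 0 := by
    intro i h
    have := (hs (i + 1)).2; push_cast at this; exact this (by linarith)
  have hb₁0 : (3/2 + ξ/2 - s : ℝ) ≠ 0 := by simpa using hb₁ 0
  have hb₂0 : (3/2 - ξ/2 - s : ℝ) ≠ 0 := by simpa using hb₂ 0
  have hs0 : (-s : ℝ) ≠ 0 := by simpa using hns 0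
  have hsne : s ≠ 0 := fun h => hs0 (by rw [h, neg_zero])
  have hΓm : Real.Gamma (-s) ≠ 0 := Real.Gamma_ne_zero fun m => hns m
  have hAne : A ≠ 0 := ne_of_gt hA
  -- algebraic identities from ξ² = 1 − 8λ
  have hP : s * (s - 1) + 2 * lam = (1/2 + ξ/2 - s) * (1/2 - ξ/2 - s) := by
    linear_combination (1/4) * hξ2
  have hQ : (s - 1) * (s - 1 - 1) + 2 * lam = (3/2 + ξ/2 - s) * (3/2 - ξ/2 - s) := by
    linear_combination (1/4) * hξ2
  have hcoef : s * (s - 1) / 2 + lam = (1/2 + ξ/2 - s) * (1/2 - ξ/2 - s) / 2 := by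
    linear_combination (1/8) * hξ2
  -- expand F s
  have hFs := hF s
  rw [F22_shift (-s) (3/2 + ξ/2 - s) (3/2 - ξ/2 - s) (2/A) hb₁ hb₂, hP] at hFs
  -- expand F (s-1)
  have hFs' := hF (s - 1)
  rw [show (-(s-1) : ℝ) = -s + 1 by ring,
      show (3/2 + ξ/2 - (s-1) : ℝ) = (3/2 + ξ/2 - s) + 1 by ring,
      show (3/2 - ξ/2 - (s-1) : ℝ) = (3/2 - ξ/2 - s) + 1 by ring,
      show (1/2 + ξ/2 - (s-1) : ℝ) = (1/2 + ξ/2 - s) + 1 by ring,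
      show (1/2 - ξ/2 - (s-1) : ℝ) = (1/2 - ξ/2 - s) + 1 by ring,
      show ((s-1) * (s-1-1) + 2 * lam : ℝ) = (3/2 + ξ/2 - s) * (3/2 - ξ/2 - s) from hQ,
      Real.Gamma_add_one hα0, Real.Gamma_add_one hβ0, Real.Gamma_add_one hs0,
      Real.rpow_sub hA, Real.rpow_one,
      show ((2:ℝ) ^ (s - 1)) = 2 ^ s / 2 by rw [Real.rpow_sub two_pos, Real.rpow_one]] at hFs'
  rw [hFs, hFs', hcoef]
  set p := (3/2 + ξ/2 - s : ℝ) with hp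
  set q := (3/2 - ξ/2 - s : ℝ) with hq
  set a := (1/2 + ξ/2 - s : ℝ) with ha
  set b := (1/2 - ξ/2 - s : ℝ) with hb
  set G := F22 1 (-s + 1) (p + 1) (q + 1) (2/A) with hG
  set Ga := Real.Gamma a with hGa
  set Gb := Real.Gamma b with hGb
  set Gm := Real.Gamma (-s) with hGm
  field_simp
  ring
end

section
/- Let c, d ∈ ℝ be such that neither c nor d is a nonpositive integer, and let z > 0. Define, for δ in a sufficiently small neighborhood of 0, φ(δ) = z^{−δ} · Σ_{j=0}^{∞} Γ(c + j − δ)/(Γ(1 + j − δ)·Γ(d + j − δ)) · z^j. Then φ is differentiable at δ = 0, with φ'(0) = Σ_{j=0}^{∞} Γ(c + j)/(Γ(1 + j)·Γ(d + j)) · z^j · [ ψ(1 + j) + ψ(d + j) − ψ(c + j) − log z ], where ψ = Γ'/Γ is the digamma function. -/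
/-!
The terms extend holomorphically in `δ` to a complex disc around `0` that stays away from the poles
of the Gamma functions. There the ratio of consecutive terms, `z (c+j-s) / ((1+j-s)(d+j-s))`, is
`O(1/j)` uniformly, so the terms are dominated by `K C^j / j!`. By the Weierstrass M-test the series
is holomorphic on the disc and can be differentiated termwise; back on the real line, the
logarithmic derivative at `0` of the `j`-th term is `ψ(1+j) + ψ(d+j) - ψ(c+j) - log z`.
-/

/-- The digamma function `ψ = Γ'/Γ`. -/
noncomputable def digamma (x : ℝ) : ℝ := deriv Real.Gamma x / Real.Gamma x

open Filter Metric

theorem exists_pos_mul_succ_le_norm_add_natCast {a : ℂ} (ha : ∀ n : ℕ, a ≠ -n) :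
    ∃ γ > 0, ∀ n : ℕ, γ * (n + 1) ≤ ‖a + n‖ := by
  have hlow : ∀ n : ℕ, (n : ℝ) ≤ ‖a + n‖ + ‖a‖ := fun n => by
    simpa using norm_sub_le (a + n) a
  have hlim : Tendsto (fun n : ℕ => ‖a + n‖) atTop atTop :=
    tendsto_atTop_mono (fun n => by linarith [hlow n])
      (tendsto_atTop_add_const_right _ (-‖a‖) tendsto_natCast_atTop_atTop)
  obtain ⟨n₀, hn₀⟩ := (Nat.cofinite_eq_atTop ▸ hlim).exists_forall_le
  have hρ : 0 < ‖a + n₀‖ := norm_pos_iff.2 fun h => ha n₀ (eq_neg_of_add_eq_zero_left h)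
  refine ⟨‖a + n₀‖ / (‖a + n₀‖ + ‖a‖ + 1), by positivity, fun n => ?_⟩
  rw [div_mul_eq_mul_div, div_le_iff₀ (by positivity)]
  nlinarith [hn₀ n, hlow n, norm_nonneg a]

theorem half_mul_succ_le_norm_add_natCast_sub {a s : ℂ} {γ : ℝ}
    (ha : ∀ n : ℕ, γ * (n + 1) ≤ ‖a + n‖) (hs : ‖s‖ ≤ γ / 2) (n : ℕ) :
    γ / 2 * (n + 1) ≤ ‖a + n - s‖ := by
  have h := norm_sub_norm_le (a + n) s
  nlinarith [ha n, norm_nonneg s, n.cast_nonneg (α := ℝ)]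

theorem add_natCast_sub_ne_neg_natCast {a s : ℂ} (h : ∀ n : ℕ, a + n - s ≠ 0) (j m : ℕ) :
    a + j - s ≠ -m := fun hjm => h (j + m) (by push_cast; linear_combination hjm)

theorem le_pow_div_factorial_mul_of_le_div_succ_mul {f : ℕ → ℝ} {C : ℝ} (hC : 0 ≤ C)
    (hf : ∀ j : ℕ, f (j + 1) ≤ C / (j + 1) * f j) (j : ℕ) :
    f j ≤ C ^ j / j.factorial * f 0 := by
  induction j with
  | zero => simp
  | succ j ih =>
    calc f (j + 1) ≤ C / (j + 1) * (C ^ j / j.factorial * f 0) := by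
          grw [hf j, ih]
      _ = C ^ (j + 1) / (j + 1).factorial * f 0 := by
          push_cast [Nat.factorial_succ]; field_simp; ring

/-- The factor `w ^ (-s)` sits inside every term, so that termwise differentiation already
produces the `-log z` of the derivative. -/
noncomputable def gammaRatioTerm (a b w : ℂ) (j : ℕ) (s : ℂ) : ℂ :=
  w ^ (-s) *
    (Complex.Gamma (a + j - s) / (Complex.Gamma (1 + j - s) * Complex.Gamma (b + j - s)) * w ^ j)

section GammaRatioTerm

variable {a b w s : ℂ}

theorem differentiableAt_gammaRatioTerm (hw : w ≠ 0) (ha : ∀ n : ℕ, a + n - s ≠ 0)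
    (h1 : ∀ n : ℕ, 1 + n - s ≠ 0) (hb : ∀ n : ℕ, b + n - s ≠ 0) (j : ℕ) :
    DifferentiableAt ℂ (gammaRatioTerm a b w j) s := by
  have hΓ {x : ℂ} (hx : ∀ n : ℕ, x + n - s ≠ 0) :
      DifferentiableAt ℂ (fun t => Complex.Gamma (x + j - t)) s :=
    (Complex.differentiableAt_Gamma _ (add_natCast_sub_ne_neg_natCast hx j)).comp s
      (differentiableAt_id.const_sub _)
  refine (differentiableAt_id.neg.const_cpow (Or.inl hw)).mul
    (((hΓ ha).div ((hΓ h1).mul (hΓ hb)) ?_).mul_const _)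
  exact mul_ne_zero (Complex.Gamma_ne_zero (add_natCast_sub_ne_neg_natCast h1 j))
    (Complex.Gamma_ne_zero (add_natCast_sub_ne_neg_natCast hb j))

theorem gammaRatioTerm_succ (j : ℕ) (ha : a + j - s ≠ 0) (h1 : 1 + j - s ≠ 0)
    (hb : b + j - s ≠ 0) :
    gammaRatioTerm a b w (j + 1) s =
      gammaRatioTerm a b w j s * (w * (a + j - s) / ((1 + j - s) * (b + j - s))) := by
  have hshift (x : ℂ) : x + ((j + 1 : ℕ) : ℂ) - s = x + j - s + 1 := by push_cast; ring
  simp only [gammaRatioTerm, hshift, Complex.Gamma_add_one _ ha, Complex.Gamma_add_one _ h1,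
    Complex.Gamma_add_one _ hb, div_eq_mul_inv, mul_inv]
  ring

theorem norm_mul_div_mul_le_div_succ {γ : ℝ} (hγ : 0 < γ) (hs : ‖s‖ ≤ 1)
    (h1 : ∀ n : ℕ, γ * (n + 1) ≤ ‖1 + n - s‖) (hb : ∀ n : ℕ, γ * (n + 1) ≤ ‖b + n - s‖)
    (j : ℕ) :
    ‖w * (a + j - s) / ((1 + j - s) * (b + j - s))‖ ≤
      ‖w‖ * (‖a‖ + 1) / γ ^ 2 / (j + 1) := by
  have hnum : ‖a + j - s‖ ≤ (‖a‖ + 1) * (j + 1) := by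
    have := norm_sub_le (a + j) s
    have := norm_add_le a (j : ℂ)
    rw [Complex.norm_natCast] at this
    nlinarith [norm_nonneg a, j.cast_nonneg (α := ℝ)]
  have hj : (0 : ℝ) < j + 1 := by positivity
  calc ‖w * (a + j - s) / ((1 + j - s) * (b + j - s))‖
      = ‖w‖ * ‖a + j - s‖ / (‖1 + j - s‖ * ‖b + j - s‖) := by
        rw [norm_div, norm_mul, norm_mul]
    _ ≤ ‖w‖ * ((‖a‖ + 1) * (j + 1)) / ((γ * (j + 1)) * (γ * (j + 1))) := by
        gcongr
        exacts [h1 j, hb j]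
    _ = ‖w‖ * (‖a‖ + 1) / γ ^ 2 / (j + 1) := by field_simp

end GammaRatioTerm

theorem exists_summable_bound_gammaRatioTerm {a b w : ℂ} (hw : w ≠ 0) (ha : ∀ n : ℕ, a ≠ -n)
    (hb : ∀ n : ℕ, b ≠ -n) :
    ∃ r > 0, ∃ u : ℕ → ℝ, Summable u ∧
      (∀ j, DifferentiableOn ℂ (gammaRatioTerm a b w j) (ball 0 r)) ∧
      ∀ j, ∀ s ∈ ball (0 : ℂ) r, ‖gammaRatioTerm a b w j s‖ ≤ u j := by
  obtain ⟨γa, hγa, hag⟩ := exists_pos_mul_succ_le_norm_add_natCast ha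
  obtain ⟨γb, hγb, hbg⟩ := exists_pos_mul_succ_le_norm_add_natCast hb
  set γ := min 1 (min γa γb)
  have hγ : 0 < γ := by positivity
  have hfar {x : ℂ} {γx : ℝ} (hγx : γ ≤ γx) (hx : ∀ n : ℕ, γx * (n + 1) ≤ ‖x + n‖)
      {s : ℂ} (hs : s ∈ closedBall 0 (γ / 2)) (n : ℕ) : γ / 2 * (n + 1) ≤ ‖x + n - s‖ :=
    half_mul_succ_le_norm_add_natCast_sub
      (fun n => (mul_le_mul_of_nonneg_right hγx (by positivity)).trans (hx n))
      (mem_closedBall_zero_iff.1 hs) n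
  have hone : ∀ n : ℕ, (1 : ℝ) * (n + 1) ≤ ‖1 + (n : ℂ)‖ := fun n => by
    rw [show (1 : ℂ) + n = ((n + 1 : ℕ) : ℂ) by push_cast; ring, Complex.norm_natCast]
    push_cast; linarith
  have hfar_a {s} (hs : s ∈ closedBall (0 : ℂ) (γ / 2)) := hfar (by simp [γ]) hag hs
  have hfar_1 {s} (hs : s ∈ closedBall (0 : ℂ) (γ / 2)) := hfar (min_le_left _ _) hone hs
  have hfar_b {s} (hs : s ∈ closedBall (0 : ℂ) (γ / 2)) := hfar (by simp [γ]) hbg hs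
  have hne {x s : ℂ} (hx : ∀ n : ℕ, γ / 2 * (n + 1) ≤ ‖x + n - s‖) (n : ℕ) : x + n - s ≠ 0 :=
    norm_pos_iff.1 (((by positivity) : (0 : ℝ) < γ / 2 * (n + 1)).trans_le (hx n))
  have hdiff : ∀ j, ∀ s ∈ closedBall (0 : ℂ) (γ / 2),
      DifferentiableAt ℂ (gammaRatioTerm a b w j) s := fun j s hs =>
    differentiableAt_gammaRatioTerm hw (hne (hfar_a hs)) (hne (hfar_1 hs)) (hne (hfar_b hs)) j
  obtain ⟨K, hK⟩ := (isCompact_closedBall (0 : ℂ) (γ / 2)).exists_bound_of_continuousOn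
    fun s hs => (hdiff 0 s hs).continuousAt.continuousWithinAt
  set C := ‖w‖ * (‖a‖ + 1) / (γ / 2) ^ 2
  refine ⟨γ / 2, by positivity, fun j => C ^ j / j.factorial * K,
    (Real.summable_pow_div_factorial C).mul_right K,
    fun j s hs => (hdiff j s (ball_subset_closedBall hs)).differentiableWithinAt,
    fun j s hs => ?_⟩
  replace hs := ball_subset_closedBall hs
  have hs1 : ‖s‖ ≤ 1 := by
    linarith [mem_closedBall_zero_iff.1 hs, min_le_left 1 (min γa γb)]
  refine (le_pow_div_factorial_mul_of_le_div_succ_mul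
    (f := fun j => ‖gammaRatioTerm a b w j s‖) (C := C) (by positivity) (fun j => ?_) j).trans
    (mul_le_mul_of_nonneg_left (hK s hs) (by positivity))
  rw [gammaRatioTerm_succ j (hne (hfar_a hs) j) (hne (hfar_1 hs) j) (hne (hfar_b hs) j),
    norm_mul, mul_comm (C / _)]
  exact mul_le_mul_of_nonneg_left
    (norm_mul_div_mul_le_div_succ (by positivity) hs1 (hfar_1 hs) (hfar_b hs) j) (norm_nonneg _)

theorem hasDerivAt_tsum_of_complexification {f : ℕ → ℝ → ℝ} {F : ℕ → ℂ → ℂ} {u : ℕ → ℝ}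
    {U : Set ℂ} {x : ℝ} (hu : Summable u) (hU : IsOpen U) (hx : (x : ℂ) ∈ U)
    (hF : ∀ j, DifferentiableOn ℂ (F j) U) (hFu : ∀ j, ∀ s ∈ U, ‖F j s‖ ≤ u j)
    (hfF : ∀ j (t : ℝ), (f j t : ℂ) = F j t) :
    HasDerivAt (fun t => ∑' j, f j t) (∑' j, deriv (f j) x) x := by
  have hderiv (j : ℕ) : deriv (f j) x = (deriv (F j) x).re := by
    have h := ((hF j).differentiableAt (hU.mem_nhds hx)).hasDerivAt.real_of_complex
    simp only [← hfF, Complex.ofReal_re] at h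
    exact h.deriv
  have hG := (Complex.differentiableOn_tsum_of_summable_norm hu hF hU hFu).differentiableAt
    (hU.mem_nhds hx)
  have hsum := Complex.hasSum_re (Complex.hasSum_deriv_of_summable_norm hu hF hU hFu hx)
  rw [tsum_congr hderiv, hsum.tsum_eq]
  convert hG.hasDerivAt.real_of_complex using 2 with t
  simp only [← hfF, ← Complex.ofReal_tsum, Complex.ofReal_re]

theorem hasDerivAt_Gamma_sub {x : ℝ} (hx : ∀ m : ℕ, x ≠ -m) :
    HasDerivAt (fun δ => Real.Gamma (x - δ)) (-(digamma x * Real.Gamma x)) 0 := by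
  have h := (Real.differentiableAt_Gamma (by simpa using hx)).hasDerivAt.comp (0 : ℝ)
    ((hasDerivAt_id (0 : ℝ)).const_sub x)
  simp only [Function.comp_def, id, sub_zero, mul_neg_one] at h
  rwa [digamma, div_mul_cancel₀ _ (Real.Gamma_ne_zero hx)]

theorem hasDerivAt_rpow_neg_mul_Gamma_div {z a e b y : ℝ} (hz : 0 < z) (ha : ∀ m : ℕ, a ≠ -m)
    (he : ∀ m : ℕ, e ≠ -m) (hb : ∀ m : ℕ, b ≠ -m) :
    HasDerivAt
      (fun δ => z ^ (-δ) * (Real.Gamma (a - δ) / (Real.Gamma (e - δ) * Real.Gamma (b - δ)) * y))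
      (Real.Gamma a / (Real.Gamma e * Real.Gamma b) * y *
        (digamma e + digamma b - digamma a - Real.log z)) 0 := by
  have hpow := (Real.hasStrictDerivAt_const_rpow hz (-0)).hasDerivAt.comp (0 : ℝ)
    (hasDerivAt_neg (0 : ℝ))
  have hΓe := Real.Gamma_ne_zero he
  have hΓb := Real.Gamma_ne_zero hb
  refine (hpow.mul (((hasDerivAt_Gamma_sub ha).div ((hasDerivAt_Gamma_sub he).mul
    (hasDerivAt_Gamma_sub hb)) (by simp [hΓe, hΓb])).mul_const y)).congr_deriv ?_
  simp only [Function.comp_apply, Pi.div_apply, Pi.mul_apply, neg_zero, Real.rpow_zero, sub_zero]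
  field_simp
  ring

/-- For `c, d` not nonpositive integers and `z > 0`, the function
`φ(δ) = z^{−δ}·Σ_{j≥0} Γ(c+j−δ)/(Γ(1+j−δ)Γ(d+j−δ))·z^j` (defined near `δ = 0`) is
differentiable at `0` with derivative
`Σ_{j≥0} Γ(c+j)/(Γ(1+j)Γ(d+j))·z^j·[ψ(1+j) + ψ(d+j) − ψ(c+j) − log z]`. -/
theorem derivative_of_parametrized_series
    (c d : ℝ) (hc : ∀ k : ℕ, c ≠ -(k : ℝ)) (hd : ∀ k : ℕ, d ≠ -(k : ℝ))
    (z : ℝ) (hz : 0 < z)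
    (φ : ℝ → ℝ)
    (hφ : ∀ᶠ δ in nhds (0 : ℝ), φ δ =
      z ^ (-δ) * ∑' j : ℕ,
        Real.Gamma (c + j - δ) / (Real.Gamma (1 + j - δ) * Real.Gamma (d + j - δ)) * z ^ j) :
    HasDerivAt φ
      (∑' j : ℕ,
        Real.Gamma (c + j) / (Real.Gamma (1 + j) * Real.Gamma (d + j)) * z ^ j *
          (digamma (1 + j) + digamma (d + j) - digamma (c + j) - Real.log z)) 0 := by
  set f : ℕ → ℝ → ℝ := fun j δ =>
    z ^ (-δ) * (Real.Gamma (c + j - δ) / (Real.Gamma (1 + j - δ) * Real.Gamma (d + j - δ)) * z ^ j)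
  have hshift {x : ℝ} (hx : ∀ k : ℕ, x ≠ -k) (j m : ℕ) : x + j ≠ -m := fun h =>
    hx (j + m) (by push_cast; linarith)
  have hone (j m : ℕ) : 1 + (j : ℝ) ≠ -m := by
    linarith [m.cast_nonneg (α := ℝ), j.cast_nonneg (α := ℝ)]
  have hf (j : ℕ) := hasDerivAt_rpow_neg_mul_Gamma_div (y := z ^ j) hz (hshift hc j) (hone j)
    (hshift hd j)
  obtain ⟨r, hr, u, hu, hdiff, hbound⟩ := exists_summable_bound_gammaRatioTerm
    (a := c) (b := d) (Complex.ofReal_ne_zero.2 hz.ne')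
    (fun k h => hc k (by exact_mod_cast h)) (fun k h => hd k (by exact_mod_cast h))
  have hfF (j : ℕ) (t : ℝ) : (f j t : ℂ) = gammaRatioTerm c d z j t := by
    simp only [f, gammaRatioTerm, Complex.ofReal_mul, Complex.ofReal_div,
      Complex.ofReal_cpow hz.le, ← Complex.Gamma_ofReal]
    push_cast; rfl
  have hS := hasDerivAt_tsum_of_complexification (x := 0) hu isOpen_ball (by simpa using hr)
    hdiff hbound hfF
  rw [tsum_congr fun j => ((hf j).deriv).symm]
  refine hS.congr_of_eventuallyEq ?_
  filter_upwards [hφ] with δ hδ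
  rw [hδ, ← tsum_mul_left]
end
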